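/- Let J(p), R(p), Q(p) be matrix-valued functions on a parameter set Ω with, for every p ∈ Ω, J(p) skew-symmetric, R(p) symmetric positive semi-definite, and Q a constant symmetric positive definite matrix. Let V ∈ ℝ^{n×r} have full column rank and W = QV(VᵀQV)^{−1}. Then for every p ∈ Ω, the reduced system matrices Ĵ(p) = WᵀJ(p)W, R̂(p) = WᵀR(p)W, and Q̂ = VᵀQV satisfy: Ĵ(p) is skew-symmetric, R̂(p) is symmetric positive semi-definite, and Q̂ is symmetric positive definite; hence the reduced matrix (Ĵ(p) − R̂(p))Q̂ has all eigenvalues with nonpositive real part for all p ∈ Ω. -/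

import Mathlib

/-!
Congruence `A ↦ Wᵀ A W` preserves skew-symmetry and positive semi-definiteness for any `W`, and
`Vᵀ Q V` is positive definite because `V` is injective. For the spectral claim, let
`(J - R) Q v = λ v` with `v ≠ 0` and put `w = Q v`. Then
`w* J w - w* R w = λ · v* Q v`; the first term is purely imaginary, the second has nonnegative
real part and `v* Q v > 0`, so `Re λ ≤ 0`.
-/

open Matrix
open scoped ComplexOrder

namespace Matrix

variable {n m : Type*}

theorem transpose_mul_mul_eq_neg_of_transpose_eq_neg {α : Type*} [CommRing α] [Fintype n]
    {A : Matrix n n α} (hA : Aᵀ = -A) (W : Matrix n m α) :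
    (Wᵀ * A * W)ᵀ = -(Wᵀ * A * W) := by
  simp [transpose_mul, hA, Matrix.mul_assoc]

theorem conjTranspose_map_ofReal (S : Matrix n m ℝ) :
    (S.map Complex.ofReal)ᴴ = Sᵀ.map Complex.ofReal := by
  ext i j
  simp

variable [Fintype n]

theorem re_star_dotProduct_mulVec_self_eq_zero {𝕜 : Type*} [RCLike 𝕜] {A : Matrix n n 𝕜}
    (hA : Aᴴ = -A) (x : n → 𝕜) : RCLike.re (star x ⬝ᵥ A *ᵥ x) = 0 := by
  have h : star (star x ⬝ᵥ A *ᵥ x) = star x ⬝ᵥ Aᴴ *ᵥ x := by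
    rw [star_dotProduct, star_star, star_mulVec, ← dotProduct_mulVec]
  rw [hA, neg_mulVec, dotProduct_neg] at h
  have h_re := congrArg RCLike.re h
  rw [RCLike.star_def, RCLike.conj_re, map_neg] at h_re
  linarith

theorem re_le_zero_of_mulVec_eq_smul {𝕜 : Type*} [RCLike 𝕜] {J R Q : Matrix n n 𝕜}
    (hJ : Jᴴ = -J) (hR : R.PosSemidef) (hQ : Q.PosDef) {μ : 𝕜} {v : n → 𝕜} (hv : v ≠ 0)
    (hμ : ((J - R) * Q) *ᵥ v = μ • v) : RCLike.re μ ≤ 0 := by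
  set w := Q *ᵥ v
  have key : star w ⬝ᵥ J *ᵥ w - star w ⬝ᵥ R *ᵥ w = μ * (star v ⬝ᵥ Q *ᵥ v) := by
    rw [← dotProduct_sub, ← sub_mulVec, mulVec_mulVec, hμ, dotProduct_smul, smul_eq_mul,
      star_mulVec, ← dotProduct_mulVec, hQ.1.eq]
  have h_re := congrArg RCLike.re key
  rw [map_sub, re_star_dotProduct_mulVec_self_eq_zero hJ, RCLike.mul_re,
    hQ.1.im_star_dotProduct_mulVec_self, mul_zero, sub_zero, zero_sub] at h_re
  have hRw := hR.re_dotProduct_nonneg w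
  have hQv := hQ.re_dotProduct_pos hv
  nlinarith

theorem re_star_dotProduct_map_ofReal_mulVec (S : Matrix n n ℝ) (v : n → ℂ) :
    (star v ⬝ᵥ S.map Complex.ofReal *ᵥ v).re
      = (fun i => (v i).re) ⬝ᵥ S *ᵥ (fun i => (v i).re)
        + (fun i => (v i).im) ⬝ᵥ S *ᵥ (fun i => (v i).im) := by
  simp [dotProduct, mulVec, Complex.mul_re, Complex.re_sum, Finset.mul_sum,
    ← Finset.sum_add_distrib]

theorem PosSemidef.map_ofReal {S : Matrix n n ℝ} (hS : S.PosSemidef) :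
    (S.map Complex.ofReal).PosSemidef := by
  have hH : (S.map Complex.ofReal).IsHermitian := hS.1.map _ fun _ => by simp
  refine .of_dotProduct_mulVec_nonneg hH fun v => RCLike.nonneg_iff.mpr
    ⟨?_, hH.im_star_dotProduct_mulVec_self v⟩
  rw [RCLike.re_to_complex, re_star_dotProduct_map_ofReal_mulVec]
  exact add_nonneg (by simpa using hS.dotProduct_mulVec_nonneg _)
    (by simpa using hS.dotProduct_mulVec_nonneg _)

theorem PosDef.map_ofReal [DecidableEq n] {S : Matrix n n ℝ} (hS : S.PosDef) :
    (S.map Complex.ofReal).PosDef :=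
  hS.posSemidef.map_ofReal.posDef_iff_isUnit.mpr (hS.isUnit.map Complex.ofRealHom.mapMatrix)

theorem re_le_zero_of_map_ofReal_mulVec_eq_smul {J R Q : Matrix n n ℝ} (hJ : Jᵀ = -J)
    (hR : R.PosSemidef) (hQ : Q.PosDef) {μ : ℂ} {v : n → ℂ} (hv : v ≠ 0)
    (hμ : (((J - R) * Q).map Complex.ofReal) *ᵥ v = μ • v) : μ.re ≤ 0 := by
  classical
  have hJc : (J.map Complex.ofReal)ᴴ = -J.map Complex.ofReal := by
    rw [conjTranspose_map_ofReal, hJ, Matrix.map_neg _ Complex.ofReal_neg]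
  have h_map : ((J - R) * Q).map Complex.ofReal
      = (J.map Complex.ofReal - R.map Complex.ofReal) * Q.map Complex.ofReal := by
    rw [← Matrix.map_sub _ Complex.ofReal_sub]
    exact Matrix.map_mul (f := Complex.ofRealHom)
  rw [h_map] at hμ
  exact re_le_zero_of_mulVec_eq_smul hJc hR.map_ofReal hQ.map_ofReal hv hμ

end Matrix

theorem stmt_14_general {n r : ℕ} {Ω : Type*}
    (J R : Ω → Matrix (Fin n) (Fin n) ℝ) (Q : Matrix (Fin n) (Fin n) ℝ)
    (hJ : ∀ p, (J p)ᵀ = -(J p)) (hR : ∀ p, (R p).PosSemidef) (hQ : Q.PosDef)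
    (V : Matrix (Fin n) (Fin r) ℝ) (hV : Function.Injective V.mulVec)
    (W : Matrix (Fin n) (Fin r) ℝ) :
    ∀ p : Ω,
      (Wᵀ * J p * W)ᵀ = -(Wᵀ * J p * W) ∧
      (Wᵀ * R p * W).PosSemidef ∧
      (Vᵀ * Q * V).PosDef ∧
      (∀ (lam : ℂ) (v : Fin r → ℂ), v ≠ 0 →
        (((Wᵀ * J p * W - Wᵀ * R p * W) * (Vᵀ * Q * V)).map Complex.ofReal) *ᵥ v
          = lam • v → lam.re ≤ 0) := by
  intro p
  have hJW := transpose_mul_mul_eq_neg_of_transpose_eq_neg (hJ p) W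
  have hRW : (Wᵀ * R p * W).PosSemidef := by
    simpa [conjTranspose_eq_transpose_of_trivial] using (hR p).conjTranspose_mul_mul_same W
  have hQV : (Vᵀ * Q * V).PosDef := by
    simpa [conjTranspose_eq_transpose_of_trivial] using hQ.conjTranspose_mul_mul_same hV
  exact ⟨hJW, hRW, hQV, fun _ _ hv hμ => re_le_zero_of_map_ofReal_mulVec_eq_smul hJW hRW hQV hv hμ⟩

/-- Structure preservation of the global-basis IRKA-PH projection together
with DH-stability: if `J(p)` is skew-symmetric and `R(p)` symmetric PSD for
all `p ∈ Ω`, `Q` is a constant symmetric positive definite matrix, `V` has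
full column rank and `W = QV(VᵀQV)⁻¹`, then for every `p` the reduced matrices
`Ĵ(p) = WᵀJ(p)W`, `R̂(p) = WᵀR(p)W`, `Q̂ = VᵀQV` are skew-symmetric, symmetric
PSD, and symmetric positive definite respectively, and every eigenvalue of
`(Ĵ(p) − R̂(p))Q̂` has nonpositive real part. -/
theorem stmt_14 {n r : ℕ} {Ω : Type*}
    (J R : Ω → Matrix (Fin n) (Fin n) ℝ) (Q : Matrix (Fin n) (Fin n) ℝ)
    (hJ : ∀ p, (J p)ᵀ = -(J p)) (hR : ∀ p, (R p).PosSemidef) (hQ : Q.PosDef)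
    (V : Matrix (Fin n) (Fin r) ℝ) (hV : Function.Injective V.mulVec)
    (W : Matrix (Fin n) (Fin r) ℝ) (hW : W = Q * V * (Vᵀ * Q * V)⁻¹) :
    ∀ p : Ω,
      (Wᵀ * J p * W)ᵀ = -(Wᵀ * J p * W) ∧
      (Wᵀ * R p * W).PosSemidef ∧
      (Vᵀ * Q * V).PosDef ∧
      (∀ (lam : ℂ) (v : Fin r → ℂ), v ≠ 0 →
        (((Wᵀ * J p * W - Wᵀ * R p * W) * (Vᵀ * Q * V)).map Complex.ofReal) *ᵥ v
          = lam • v → lam.re ≤ 0) :=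
  stmt_14_general J R Q hJ hR hQ V hV W
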